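/- Let d ≥ 1 be an integer, α, L > 0, 0 < ε₀ ≤ 1, and let p, q ≥ 1 be real numbers. There exists a constant C > 0, depending only on d, α, L, ε₀, p and q, such that for all integers n ≥ 1, sup over (μ,K) ∈ M(α,L,ε₀) of E_μ[|S_p(K) − S_p(K̂ₙ)|^q] ≤ C·n^{−q/α}, where S_p(K) = ‖φ_K‖_p (for p = 1 this is the mean width functional). -/

import Mathlib

/-!
Fix a unit direction `u`. The support deficit `h_K(u) - h_{K̂ₙ}(u)` exceeds `t` only if none of
the `n` samples lies in the cap of `K` of depth comparable to `t`, which has `μ`-mass at least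
`L t^α`; hence the deficit has the tail `exp (-c n t^α)`, and integrating the tail (layer cake
plus the Gamma integral) bounds its `r`-th moment by `C n^{-r/α}`. With `r = max p q`, the
reverse triangle inequality and the monotonicity of `L^p` norms on the (sub-)probability measure
`σ` give `|S_p(K) - S_p(K̂ₙ)| ≤ ‖φ_K - φ_{K̂ₙ}‖_r`; Jensen's inequality for the concave power
`q / r` and Fubini then reduce the claim to the directional moment bounds.
-/

open MeasureTheory Metric Set
open scoped RealInnerProductSpace ENNReal NNReal

noncomputable section

abbrev Euc (d : ℕ) := EuclideanSpace ℝ (Fin d)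

def IsConvexBody {d : ℕ} (K : Set (Euc d)) : Prop :=
  Convex ℝ K ∧ IsCompact K ∧ (interior K).Nonempty

def suppFn {d : ℕ} (K : Set (Euc d)) (u : Euc d) : ℝ :=
  sSup ((fun x => (inner ℝ u x : ℝ)) '' K)

def cap {d : ℕ} (K : Set (Euc d)) (u : Euc d) (ε : ℝ) : Set (Euc d) :=
  {x ∈ K | suppFn K u - ε ≤ (inner ℝ u x : ℝ)}

def measSupp {d : ℕ} (μ : Measure (Euc d)) : Set (Euc d) :=
  (⋃₀ {O : Set (Euc d) | IsOpen O ∧ μ O = 0})ᶜ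

def MemM {d : ℕ} (α L ε₀ : ℝ) (μ : Measure (Euc d)) (K : Set (Euc d)) : Prop :=
  IsProbabilityMeasure μ ∧ IsConvexBody K ∧ K ⊆ closedBall 0 1 ∧
    measSupp μ ⊆ K ∧
    ∀ u : Euc d, ‖u‖ = 1 → ∀ ε : ℝ, ε ∈ Icc 0 ε₀ →
      ENNReal.ofReal (L * ε ^ α) ≤ μ (cap K u ε)

def Cconst (α : ℝ) : ℝ := ⨅ t : {t : ℝ // 0 < t}, (1 + t.1) ^ α / (1 + t.1 ^ α)

def hullOf {d n : ℕ} (ω : Fin n → Euc d) : Set (Euc d) := convexHull ℝ (Set.range ω)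

def jointLaw {d : ℕ} (n : ℕ) (μ : Measure (Euc d)) : Measure (Fin n → Euc d) :=
  Measure.pi fun _ => μ

def sphereσ (d : ℕ) : Measure (Euc d) :=
  (Measure.hausdorffMeasure ((d:ℝ)-1) (sphere (0:Euc d) 1))⁻¹ •
    (Measure.hausdorffMeasure ((d:ℝ)-1) : Measure (Euc d)).restrict (sphere (0:Euc d) 1)

def lpNorm (d : ℕ) (p : ℝ) (f : Euc d → ℝ) : ℝ :=
  (∫ u, |f u| ^ p ∂(sphereσ d)) ^ (1/p)

def unitBallVol (p : ℕ) : ℝ := (volume (closedBall (0 : Euc p) 1)).toReal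

def unifOn {d : ℕ} (K : Set (Euc d)) : Measure (Euc d) := (volume K)⁻¹ • volume.restrict K

def unifBd {d : ℕ} (K : Set (Euc d)) : Measure (Euc d) :=
  (Measure.hausdorffMeasure ((d:ℝ)-1) (frontier K))⁻¹ •
    (Measure.hausdorffMeasure ((d:ℝ)-1) : Measure (Euc d)).restrict (frontier K)

def Rolling {d : ℕ} (r : ℝ) (K : Set (Euc d)) : Prop :=
  ∀ x ∈ frontier K, ∃ c : Euc d, x ∈ closedBall c r ∧ closedBall c r ⊆ K

def Kdr1 (d : ℕ) (r : ℝ) : Set (Set (Euc d)) :=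
  {K | IsConvexBody K ∧ K ⊆ closedBall 0 1 ∧ Rolling r K}

def Krd (d : ℕ) (r : ℝ) : Set (Set (Euc d)) :=
  {K | IsConvexBody K ∧ Rolling (r * ((volume K).toReal / unitBallVol d) ^ (1/(d:ℝ))) K}

def dL {d : ℕ} (K K' : Set (Euc d)) : ℝ :=
  sInf {ε : ℝ | 0 ≤ ε ∧ ∃ a : Euc d,
    (fun y => a + (1 - ε) • (y - a)) '' K ⊆ K' ∧
    K' ⊆ (fun y => a + (1 + ε) • (y - a)) '' K}

section SupportFunction

variable {d : ℕ} {K : Set (Euc d)}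

lemma bddAbove_inner_image (hK : Bornology.IsBounded K) (u : Euc d) :
    BddAbove ((fun x => (inner ℝ u x : ℝ)) '' K) := by
  obtain ⟨R, hR⟩ := hK.exists_norm_le
  refine ⟨‖u‖ * R, ?_⟩
  rintro _ ⟨x, hx, rfl⟩
  exact (real_inner_le_norm u x).trans (by gcongr; exact hR x hx)

lemma inner_le_suppFn (hK : Bornology.IsBounded K) {x : Euc d} (hx : x ∈ K) (u : Euc d) :
    (inner ℝ u x : ℝ) ≤ suppFn K u :=
  le_csSup (bddAbove_inner_image hK u) ⟨x, hx, rfl⟩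

lemma suppFn_le_of_forall_inner_le (hK : K.Nonempty) {u : Euc d} {c : ℝ}
    (h : ∀ x ∈ K, (inner ℝ u x : ℝ) ≤ c) : suppFn K u ≤ c :=
  csSup_le (hK.image _) (by rintro _ ⟨x, hx, rfl⟩; exact h x hx)

lemma inner_le_norm_of_mem_closedBall {u x : Euc d} (hx : x ∈ closedBall (0 : Euc d) 1) :
    (inner ℝ u x : ℝ) ≤ ‖u‖ := by
  rw [mem_closedBall_zero_iff] at hx
  calc (inner ℝ u x : ℝ) ≤ ‖u‖ * ‖x‖ := real_inner_le_norm u x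
    _ ≤ ‖u‖ := mul_le_of_le_one_right (norm_nonneg u) hx

lemma suppFn_le_norm (hK0 : K.Nonempty) (hK1 : K ⊆ closedBall 0 1) (u : Euc d) :
    suppFn K u ≤ ‖u‖ :=
  suppFn_le_of_forall_inner_le hK0 fun _ hx => inner_le_norm_of_mem_closedBall (hK1 hx)

lemma suppFn_le_suppFn_add_norm_sub (hK0 : K.Nonempty) (hK1 : K ⊆ closedBall 0 1)
    (u v : Euc d) : suppFn K u ≤ suppFn K v + ‖u - v‖ := by
  refine suppFn_le_of_forall_inner_le hK0 fun x hx => ?_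
  have hsplit : (inner ℝ u x : ℝ) = inner ℝ v x + inner ℝ (u - v) x := by
    rw [inner_sub_left]; ring
  linarith [inner_le_suppFn (isBounded_closedBall.subset hK1) hx v,
    inner_le_norm_of_mem_closedBall (u := u - v) (hK1 hx)]

lemma lipschitzWith_suppFn (hK0 : K.Nonempty) (hK1 : K ⊆ closedBall 0 1) :
    LipschitzWith 1 (suppFn K) := by
  refine LipschitzWith.of_dist_le_mul fun u v => ?_
  rw [Real.dist_eq, NNReal.coe_one, one_mul, dist_eq_norm, abs_sub_le_iff]
  constructor
  · linarith [suppFn_le_suppFn_add_norm_sub hK0 hK1 u v]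
  · linarith [suppFn_le_suppFn_add_norm_sub hK0 hK1 v u, norm_sub_rev u v]

end SupportFunction

section HullSupport

variable {d n : ℕ}

lemma suppFn_hullOf [Nonempty (Fin n)] (ω : Fin n → Euc d) (u : Euc d) :
    suppFn (hullOf ω) u =
      Finset.univ.sup' Finset.univ_nonempty (fun i => (inner ℝ u (ω i) : ℝ)) := by
  set c := Finset.univ.sup' Finset.univ_nonempty (fun i => (inner ℝ u (ω i) : ℝ))
  have hhalf : hullOf ω ⊆ {x : Euc d | (inner ℝ u x : ℝ) ≤ c} := by
    refine convexHull_min ?_ (convex_halfSpace_le (innerₛₗ ℝ u).isLinear c)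
    rintro _ ⟨i, rfl⟩
    exact Finset.le_sup' (fun i => (inner ℝ u (ω i) : ℝ)) (Finset.mem_univ i)
  obtain ⟨i₀, -, hi₀⟩ := Finset.exists_mem_eq_sup' Finset.univ_nonempty
    (fun i => (inner ℝ u (ω i) : ℝ))
  have hmem : ω i₀ ∈ hullOf ω := subset_convexHull ℝ _ ⟨i₀, rfl⟩
  refine le_antisymm (suppFn_le_of_forall_inner_le ⟨_, hmem⟩ fun x hx => hhalf hx) ?_
  rw [show c = _ from hi₀]
  exact le_csSup ⟨c, by rintro _ ⟨x, hx, rfl⟩; exact hhalf hx⟩ ⟨ω i₀, hmem, rfl⟩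

lemma continuous_suppFn_hullOf [Nonempty (Fin n)] :
    Continuous (fun z : (Fin n → Euc d) × Euc d => suppFn (hullOf z.1) z.2) := by
  simp_rw [suppFn_hullOf]
  refine Continuous.finset_sup'_apply _ fun i _ => ?_
  exact continuous_snd.inner ((continuous_apply i).comp continuous_fst)

lemma inner_le_suppFn_hullOf (ω : Fin n → Euc d) (u : Euc d) (i : Fin n) :
    (inner ℝ u (ω i) : ℝ) ≤ suppFn (hullOf ω) u := by
  have : Nonempty (Fin n) := ⟨i⟩
  rw [suppFn_hullOf]
  exact Finset.le_sup' (fun i => (inner ℝ u (ω i) : ℝ)) (Finset.mem_univ i)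

lemma suppFn_hullOf_le [Nonempty (Fin n)] {K : Set (Euc d)} (hK : Bornology.IsBounded K)
    {ω : Fin n → Euc d} (hω : ∀ i, ω i ∈ K) (u : Euc d) :
    suppFn (hullOf ω) u ≤ suppFn K u := by
  rw [suppFn_hullOf]
  exact Finset.sup'_le _ _ fun i _ => inner_le_suppFn hK (hω i) u

end HullSupport

lemma measure_compl_measSupp {d : ℕ} (μ : Measure (Euc d)) : μ (measSupp μ)ᶜ = 0 := by
  rw [measSupp, compl_compl]
  obtain ⟨T, hTc, hTsub, hTeq⟩ := TopologicalSpace.isOpen_sUnion_countable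
    {O : Set (Euc d) | IsOpen O ∧ μ O = 0} fun O hO => hO.1
  rw [← hTeq, measure_sUnion_null_iff hTc]
  exact fun s hs => (hTsub hs).2

section SphereMeasure

variable {d : ℕ}

lemma sphereσ_univ_le_one : sphereσ d univ ≤ 1 := by
  rw [sphereσ, Measure.smul_apply, smul_eq_mul, Measure.restrict_apply MeasurableSet.univ,
    univ_inter]
  exact ENNReal.inv_mul_le_one _

instance : IsFiniteMeasure (sphereσ d) :=
  ⟨sphereσ_univ_le_one.trans_lt ENNReal.one_lt_top⟩

lemma ae_norm_eq_one_sphereσ : ∀ᵐ u ∂(sphereσ d), ‖u‖ = 1 := by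
  have hnull : sphereσ d (sphere (0 : Euc d) 1)ᶜ = 0 := by
    rw [sphereσ, Measure.smul_apply, smul_eq_mul,
      Measure.restrict_apply isClosed_sphere.measurableSet.compl]
    simp
  filter_upwards [measure_eq_zero_iff_ae_notMem.mp hnull] with u hu
  simpa using hu

lemma Continuous.memLp_sphereσ {f : Euc d → ℝ} (hf : Continuous f) (p : ℝ≥0∞) :
    MemLp f p (sphereσ d) := by
  obtain ⟨C, hC⟩ := (isCompact_sphere (0 : Euc d) 1).exists_bound_of_continuousOn hf.continuousOn
  refine MemLp.of_bound hf.aestronglyMeasurable C ?_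
  filter_upwards [ae_norm_eq_one_sphereσ] with u hu
  exact hC u (by simpa using hu)

lemma lpNorm_eq_toReal_eLpNorm {p : ℝ} (hp : 0 < p) {f : Euc d → ℝ}
    (hf : AEStronglyMeasurable f (sphereσ d)) :
    lpNorm d p f = (eLpNorm f (ENNReal.ofReal p) (sphereσ d)).toReal := by
  rw [_root_.lpNorm,
    eLpNorm_eq_lintegral_rpow_enorm_toReal (by simpa using hp) ENNReal.ofReal_ne_top,
    ← ENNReal.toReal_rpow, ENNReal.toReal_ofReal hp.le,
    integral_eq_lintegral_of_nonneg_ae (.of_forall fun _ => by positivity)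
      (hf.aemeasurable.abs.pow_const p).aestronglyMeasurable]
  congr 2
  refine lintegral_congr fun u => ?_
  rw [Real.enorm_eq_ofReal_abs, ENNReal.ofReal_rpow_of_nonneg (abs_nonneg _) hp.le]

lemma abs_lpNorm_sub_lpNorm_le {p : ℝ} (hp : 1 ≤ p) {f g : Euc d → ℝ}
    (hf : MemLp f (ENNReal.ofReal p) (sphereσ d)) (hg : MemLp g (ENNReal.ofReal p) (sphereσ d)) :
    |lpNorm d p f - lpNorm d p g| ≤ (eLpNorm (f - g) (ENNReal.ofReal p) (sphereσ d)).toReal := by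
  have : Fact (1 ≤ ENNReal.ofReal p) := ⟨by simpa using hp⟩
  have hp0 : 0 < p := one_pos.trans_le hp
  rw [lpNorm_eq_toReal_eLpNorm hp0 hf.1, lpNorm_eq_toReal_eLpNorm hp0 hg.1,
    ← Lp.norm_toLp f hf, ← Lp.norm_toLp g hg, ← Lp.norm_toLp _ (hf.sub hg), MemLp.toLp_sub]
  exact abs_norm_sub_norm_le _ _

lemma ofReal_abs_lpNorm_sub_rpow_le {p q r : ℝ} (hp : 1 ≤ p) (hpr : p ≤ r) (hq : 0 ≤ q)
    {f g : Euc d → ℝ} (hf : MemLp f (ENNReal.ofReal p) (sphereσ d))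
    (hg : MemLp g (ENNReal.ofReal p) (sphereσ d)) :
    ENNReal.ofReal (|lpNorm d p f - lpNorm d p g| ^ q) ≤
      (∫⁻ u, ‖f u - g u‖ₑ ^ r ∂(sphereσ d)) ^ (q / r) := by
  have hr0 : 0 < r := one_pos.trans_le (hp.trans hpr)
  have hmono : eLpNorm (f - g) (ENNReal.ofReal p) (sphereσ d) ≤
      eLpNorm (f - g) (ENNReal.ofReal r) (sphereσ d) := by
    refine (eLpNorm_le_eLpNorm_mul_rpow_measure_univ (ENNReal.ofReal_le_ofReal hpr)
      (hf.sub hg).1).trans (mul_le_of_le_one_right' (ENNReal.rpow_le_one sphereσ_univ_le_one ?_))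
    rw [ENNReal.toReal_ofReal (by linarith), ENNReal.toReal_ofReal hr0.le, sub_nonneg]
    exact one_div_le_one_div_of_le (by linarith) hpr
  calc ENNReal.ofReal (|lpNorm d p f - lpNorm d p g| ^ q)
      ≤ ENNReal.ofReal ((eLpNorm (f - g) (ENNReal.ofReal p) (sphereσ d)).toReal ^ q) := by
        gcongr
        exact abs_lpNorm_sub_lpNorm_le hp hf hg
    _ ≤ eLpNorm (f - g) (ENNReal.ofReal p) (sphereσ d) ^ q := by
        rw [ENNReal.toReal_rpow]
        exact ENNReal.ofReal_toReal_le
    _ ≤ eLpNorm (f - g) (ENNReal.ofReal r) (sphereσ d) ^ q := by gcongr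
    _ = (∫⁻ u, ‖f u - g u‖ₑ ^ r ∂(sphereσ d)) ^ (q / r) := by
        rw [eLpNorm_eq_lintegral_rpow_enorm_toReal (by simpa using hr0) ENNReal.ofReal_ne_top,
          ENNReal.toReal_ofReal hr0.le, ← ENNReal.rpow_mul, one_div_mul_eq_div]
        rfl

end SphereMeasure

section Probability

variable {Ω : Type*} [MeasurableSpace Ω]

lemma lintegral_rpow_le_rpow_lintegral {P : Measure Ω} [IsProbabilityMeasure P] {F : Ω → ℝ≥0∞}
    (hF : AEMeasurable F P) {c : ℝ} (hc0 : 0 < c) (hc1 : c ≤ 1) :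
    ∫⁻ ω, F ω ^ c ∂P ≤ (∫⁻ ω, F ω ∂P) ^ c := by
  have h := eLpNorm'_le_eLpNorm'_of_exponent_le one_pos (one_le_one_div hc0 hc1) P
    (hF.pow_const c).aestronglyMeasurable
  simp only [eLpNorm', enorm_eq_self, ENNReal.rpow_one, div_one, one_div_one_div,
    ← ENNReal.rpow_mul, mul_one_div_cancel hc0.ne'] at h
  exact h

open Real in
lemma lintegral_ofReal_rpow_le_of_meas_lt_le_exp {P : Measure Ω} {X : Ω → ℝ} (hX0 : 0 ≤ᵐ[P] X)
    (hX : AEMeasurable X P) {r α b : ℝ} (hr : 0 < r) (hα : 0 < α) (hb : 0 < b)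
    (htail : ∀ t > 0, P {ω | t < X ω} ≤ ENNReal.ofReal (exp (-b * t ^ α))) :
    ∫⁻ ω, ENNReal.ofReal (X ω ^ r) ∂P ≤ ENNReal.ofReal (Gamma (r / α + 1) * b ^ (-(r / α))) := by
  have hint : IntegrableOn (fun t : ℝ => t ^ (r - 1) * exp (-b * t ^ α)) (Ioi 0) :=
    integrableOn_rpow_mul_exp_neg_mul_rpow (by linarith) hα hb
  rw [lintegral_rpow_eq_lintegral_meas_lt_mul P hX0 hX hr]
  calc ENNReal.ofReal r * ∫⁻ t in Ioi 0, P {ω | t < X ω} * ENNReal.ofReal (t ^ (r - 1))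
      ≤ ENNReal.ofReal r * ∫⁻ t in Ioi 0, ENNReal.ofReal (t ^ (r - 1) * exp (-b * t ^ α)) := by
        refine mul_le_mul_right (setLIntegral_mono' measurableSet_Ioi fun t ht => ?_) _
        rw [ENNReal.ofReal_mul (Real.rpow_nonneg (le_of_lt ht) _), mul_comm]
        exact mul_le_mul_right (htail t ht) _
    _ = ENNReal.ofReal (r * ∫ t in Ioi 0, t ^ (r - 1) * exp (-b * t ^ α)) := by
        rw [ENNReal.ofReal_mul hr.le, ofReal_integral_eq_lintegral_ofReal hint
          (ae_restrict_of_forall_mem measurableSet_Ioi fun t ht =>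
            mul_nonneg (Real.rpow_nonneg (le_of_lt ht) _) (Real.exp_pos _).le)]
    _ = ENNReal.ofReal (Gamma (r / α + 1) * b ^ (-(r / α))) := by
        rw [integral_rpow_mul_exp_neg_mul_rpow hα (by linarith) hb, sub_add_cancel,
          Gamma_add_one (by positivity), neg_div]
        ring_nf

end Probability

section Caps

variable {d : ℕ} {K : Set (Euc d)} {u : Euc d}

lemma measurableSet_cap (hK : IsClosed K) (η : ℝ) : MeasurableSet (cap K u η) :=
  (hK.inter (isClosed_le continuous_const (continuous_const.inner continuous_id)) :
    IsClosed (K ∩ {x | suppFn K u - η ≤ (inner ℝ u x : ℝ)})).measurableSet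

lemma subset_cap_two (hK1 : K ⊆ closedBall 0 1) (hu : ‖u‖ = 1) : K ⊆ cap K u 2 := by
  intro x hx
  have hlow : -(inner ℝ u x : ℝ) ≤ 1 := by
    simpa [inner_neg_left, hu] using inner_le_norm_of_mem_closedBall (u := -u) (hK1 hx)
  have hup := suppFn_le_norm ⟨x, hx⟩ hK1 u
  exact ⟨hx, by linarith⟩

lemma measure_compl_cap_le {α L ε₀ : ℝ} {μ : Measure (Euc d)} (hM : MemM α L ε₀ μ K)
    (hL : 0 ≤ L) (hu : ‖u‖ = 1) {η : ℝ} (hη : η ∈ Icc 0 ε₀) :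
    μ (cap K u η)ᶜ ≤ ENNReal.ofReal (Real.exp (-(L * η ^ α))) := by
  obtain ⟨hprob, ⟨-, hcomp, -⟩, -, -, hcap⟩ := hM
  calc μ (cap K u η)ᶜ = 1 - μ (cap K u η) :=
        prob_compl_eq_one_sub (measurableSet_cap hcomp.isClosed η)
    _ ≤ 1 - ENNReal.ofReal (L * η ^ α) := tsub_le_tsub_left (hcap u hu η hη) 1
    _ = ENNReal.ofReal (1 - L * η ^ α) := by
        rw [← ENNReal.ofReal_one, ← ENNReal.ofReal_sub _ (by have := hη.1; positivity)]
    _ ≤ ENNReal.ofReal (Real.exp (-(L * η ^ α))) := by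
        gcongr
        linarith [Real.add_one_le_exp (-(L * η ^ α))]

end Caps

section RandomPolytope

variable {d n : ℕ} {α L ε₀ : ℝ} {μ : Measure (Euc d)} {K : Set (Euc d)}

lemma ae_forall_mem_of_measSupp_subset [SigmaFinite μ] (h : measSupp μ ⊆ K) :
    ∀ᵐ ω ∂(jointLaw n μ), ∀ i, ω i ∈ K := by
  have hK : ∀ᵐ x ∂μ, x ∈ K :=
    measure_mono_null (compl_subset_compl.mpr h) (measure_compl_measSupp μ)
  exact ae_all_iff.2 fun i => Measure.tendsto_eval_ae_ae.eventually hK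

lemma continuous_suppFn_hullOf_apply [Nonempty (Fin n)] (u : Euc d) :
    Continuous (fun ω : Fin n → Euc d => suppFn (hullOf ω) u) :=
  continuous_suppFn_hullOf.comp (continuous_id.prodMk continuous_const)

lemma setOf_lt_suppFn_sub_suppFn_hullOf_subset {u : Euc d} {t η : ℝ} (hηt : η ≤ t) :
    {ω : Fin n → Euc d | t < suppFn K u - suppFn (hullOf ω) u} ⊆
      univ.pi fun _ => (cap K u η)ᶜ := by
  intro ω hω i _ hi
  have := inner_le_suppFn_hullOf ω u i
  linarith [hi.2, show t < _ from hω]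

/-- For `t ≤ 2` no sample may lie in the cap of depth `t ε₀ / 2 ≤ ε₀`; beyond `2` the
deficit vanishes almost surely, since the cap of depth `2` is all of `K`. -/
lemma jointLaw_lt_suppFn_sub_suppFn_hullOf_le (hM : MemM α L ε₀ μ K) (hL : 0 ≤ L)
    (hε₀ : 0 ≤ ε₀) (hε₀1 : ε₀ ≤ 1) (hn : n ≠ 0) {u : Euc d} (hu : ‖u‖ = 1) {t : ℝ} (ht : 0 < t) :
    jointLaw n μ {ω | t < suppFn K u - suppFn (hullOf ω) u} ≤
      ENNReal.ofReal (Real.exp (-(n * (L * (ε₀ / 2) ^ α)) * t ^ α)) := by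
  have : IsProbabilityMeasure μ := hM.1
  have hpi : ∀ η ≤ t, jointLaw n μ {ω | t < suppFn K u - suppFn (hullOf ω) u} ≤
      μ (cap K u η)ᶜ ^ n := fun η hη => by
    refine (measure_mono (setOf_lt_suppFn_sub_suppFn_hullOf_subset hη)).trans_eq ?_
    rw [jointLaw, Measure.pi_pi, Finset.prod_const, Finset.card_univ, Fintype.card_fin]
  rcases le_or_gt t 2 with ht2 | ht2
  · have hη : t * ε₀ / 2 ∈ Icc 0 ε₀ := ⟨by positivity, by nlinarith⟩
    calc _ ≤ μ (cap K u (t * ε₀ / 2))ᶜ ^ n := hpi _ (by nlinarith)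
      _ ≤ ENNReal.ofReal (Real.exp (-(L * (t * ε₀ / 2) ^ α))) ^ n := by
          gcongr; exact measure_compl_cap_le hM hL hu hη
      _ = _ := by
          rw [← ENNReal.ofReal_pow (Real.exp_pos _).le, ← Real.exp_nat_mul, mul_div_assoc,
            Real.mul_rpow ht.le (by positivity)]
          ring_nf
  · calc _ ≤ μ (cap K u 2)ᶜ ^ n := hpi 2 ht2.le
      _ = 0 := by
          rw [measure_mono_null (compl_subset_compl.mpr (subset_cap_two hM.2.2.1 hu))
            (measure_mono_null (compl_subset_compl.mpr hM.2.2.2.1) (measure_compl_measSupp μ)),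
            zero_pow hn]
      _ ≤ _ := zero_le

lemma lintegral_enorm_suppFn_sub_suppFn_hullOf_rpow_le (hM : MemM α L ε₀ μ K) (hα : 0 < α)
    (hL : 0 < L) (hε₀ : 0 < ε₀) (hε₀1 : ε₀ ≤ 1) (hn : n ≠ 0) {u : Euc d} (hu : ‖u‖ = 1)
    {r : ℝ} (hr : 0 < r) :
    ∫⁻ ω, ‖suppFn K u - suppFn (hullOf ω) u‖ₑ ^ r ∂(jointLaw n μ) ≤
      ENNReal.ofReal (Real.Gamma (r / α + 1) * (n * (L * (ε₀ / 2) ^ α)) ^ (-(r / α))) := by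
  have : IsProbabilityMeasure μ := hM.1
  have : Nonempty (Fin n) := ⟨⟨0, Nat.pos_of_ne_zero hn⟩⟩
  have hbdd : Bornology.IsBounded K := isBounded_closedBall.subset hM.2.2.1
  have hnonneg : 0 ≤ᵐ[jointLaw n μ] fun ω => suppFn K u - suppFn (hullOf ω) u := by
    filter_upwards [ae_forall_mem_of_measSupp_subset hM.2.2.2.1] with ω hω
    exact sub_nonneg.mpr (suppFn_hullOf_le hbdd hω u)
  calc ∫⁻ ω, ‖suppFn K u - suppFn (hullOf ω) u‖ₑ ^ r ∂(jointLaw n μ)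
      = ∫⁻ ω, ENNReal.ofReal ((suppFn K u - suppFn (hullOf ω) u) ^ r) ∂(jointLaw n μ) := by
        refine lintegral_congr_ae ?_
        filter_upwards [hnonneg] with ω hω
        rw [Real.enorm_eq_ofReal hω, ENNReal.ofReal_rpow_of_nonneg hω hr.le]
    _ ≤ _ := lintegral_ofReal_rpow_le_of_meas_lt_le_exp hnonneg
        (continuous_const.sub (continuous_suppFn_hullOf_apply u)).aemeasurable hr hα
        (by positivity) fun t ht =>
          jointLaw_lt_suppFn_sub_suppFn_hullOf_le hM hL.le hε₀.le hε₀1 hn hu ht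
end RandomPolytope

def width {d : ℕ} (K : Set (Euc d)) (u : Euc d) : ℝ := suppFn K u + suppFn K (-u)

section Width

variable {d n : ℕ} {α L ε₀ : ℝ} {μ : Measure (Euc d)} {K : Set (Euc d)}

lemma continuous_width (hK0 : K.Nonempty) (hK1 : K ⊆ closedBall 0 1) : Continuous (width K) :=
  have h := (lipschitzWith_suppFn hK0 hK1).continuous
  h.add (h.comp continuous_neg)

lemma continuous_width_hullOf [Nonempty (Fin n)] :
    Continuous (fun z : (Fin n → Euc d) × Euc d => width (hullOf z.1) z.2) :=
  continuous_suppFn_hullOf.add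
    (continuous_suppFn_hullOf.comp (continuous_fst.prodMk continuous_snd.neg))

lemma lintegral_enorm_width_sub_width_hullOf_rpow_le (hM : MemM α L ε₀ μ K) (hα : 0 < α)
    (hL : 0 < L) (hε₀ : 0 < ε₀) (hε₀1 : ε₀ ≤ 1) (hn : n ≠ 0) {u : Euc d} (hu : ‖u‖ = 1)
    {r : ℝ} (hr : 1 ≤ r) :
    ∫⁻ ω, ‖width K u - width (hullOf ω) u‖ₑ ^ r ∂(jointLaw n μ) ≤
      ENNReal.ofReal (2 ^ r * Real.Gamma (r / α + 1) * (n * (L * (ε₀ / 2) ^ α)) ^ (-(r / α))) := by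
  have : Nonempty (Fin n) := ⟨⟨0, Nat.pos_of_ne_zero hn⟩⟩
  set B := Real.Gamma (r / α + 1) * (n * (L * (ε₀ / 2) ^ α)) ^ (-(r / α))
  have hB : 0 ≤ B := by
    have := Real.Gamma_pos_of_pos (s := r / α + 1) (by positivity); positivity
  set D : Euc d → (Fin n → Euc d) → ℝ := fun v ω => suppFn K v - suppFn (hullOf ω) v
  have hsplit : ∀ ω, width K u - width (hullOf ω) u = D u ω + D (-u) ω := fun ω => by
    simp only [width, D]; ring
  have hmeas : ∀ v, AEMeasurable (fun ω => ‖D v ω‖ₑ ^ r) (jointLaw n μ) := fun v =>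
    ((continuous_const.sub (continuous_suppFn_hullOf_apply v)).measurable.enorm.pow_const
      r).aemeasurable
  have hmoment : ∀ v : Euc d, ‖v‖ = 1 → ∫⁻ ω, ‖D v ω‖ₑ ^ r ∂(jointLaw n μ) ≤ ENNReal.ofReal B :=
    fun v hv => lintegral_enorm_suppFn_sub_suppFn_hullOf_rpow_le hM hα hL hε₀ hε₀1 hn hv
      (one_pos.trans_le hr)
  calc ∫⁻ ω, ‖width K u - width (hullOf ω) u‖ₑ ^ r ∂(jointLaw n μ)
      ≤ ∫⁻ ω, 2 ^ (r - 1) * (‖D u ω‖ₑ ^ r + ‖D (-u) ω‖ₑ ^ r) ∂(jointLaw n μ) := by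
        refine lintegral_mono fun ω => ?_
        rw [hsplit]
        exact (ENNReal.rpow_le_rpow (enorm_add_le _ _) (by positivity)).trans
          (ENNReal.rpow_add_le_mul_rpow_add_rpow _ _ hr)
    _ = 2 ^ (r - 1) * (∫⁻ ω, ‖D u ω‖ₑ ^ r ∂(jointLaw n μ) +
          ∫⁻ ω, ‖D (-u) ω‖ₑ ^ r ∂(jointLaw n μ)) := by
        rw [lintegral_const_mul' _ _ (by simp), lintegral_add_left' (hmeas u)]
    _ ≤ 2 ^ (r - 1) * (ENNReal.ofReal B + ENNReal.ofReal B) := by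
        gcongr
        · exact hmoment u hu
        · exact hmoment (-u) (by rwa [norm_neg])
    _ = _ := by
        rw [← two_mul, ← mul_assoc, ← ENNReal.ofReal_ofNat 2, ENNReal.ofReal_rpow_of_pos two_pos,
          ← ENNReal.ofReal_mul (by positivity), ← ENNReal.ofReal_mul (by positivity),
          Real.rpow_sub_one two_ne_zero]
        congr 1
        simp only [B]
        field_simp

lemma lintegral_rpow_lintegral_enorm_width_sub_width_hullOf_le (hM : MemM α L ε₀ μ K)
    (hα : 0 < α) (hL : 0 < L) (hε₀ : 0 < ε₀) (hε₀1 : ε₀ ≤ 1) (hn : n ≠ 0) {q r : ℝ}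
    (hq : 0 < q) (hr : 1 ≤ r) (hqr : q ≤ r) :
    ∫⁻ ω, (∫⁻ u, ‖width K u - width (hullOf ω) u‖ₑ ^ r ∂(sphereσ d)) ^ (q / r)
        ∂(jointLaw n μ) ≤
      ENNReal.ofReal (2 ^ r * Real.Gamma (r / α + 1) * (n * (L * (ε₀ / 2) ^ α)) ^ (-(r / α)))
        ^ (q / r) := by
  have : IsProbabilityMeasure μ := hM.1
  have : Nonempty (Fin n) := ⟨⟨0, Nat.pos_of_ne_zero hn⟩⟩
  have : IsProbabilityMeasure (jointLaw n μ) := by rw [jointLaw]; infer_instance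
  have hK1 := hM.2.2.1
  have hK0 : K.Nonempty := hM.2.1.2.2.mono interior_subset
  have hF : Measurable fun z : (Fin n → Euc d) × Euc d =>
      ‖width K z.2 - width (hullOf z.1) z.2‖ₑ ^ r :=
    (((continuous_width hK0 hK1).comp continuous_snd).sub
      continuous_width_hullOf).measurable.enorm.pow_const r
  set B := ENNReal.ofReal
    (2 ^ r * Real.Gamma (r / α + 1) * (n * (L * (ε₀ / 2) ^ α)) ^ (-(r / α)))
  calc _ ≤ (∫⁻ ω, ∫⁻ u, ‖width K u - width (hullOf ω) u‖ₑ ^ r ∂(sphereσ d) ∂(jointLaw n μ))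
        ^ (q / r) :=
        lintegral_rpow_le_rpow_lintegral hF.lintegral_prod_right'.aemeasurable
          (by positivity) ((div_le_one (by linarith)).mpr hqr)
    _ = (∫⁻ u, ∫⁻ ω, ‖width K u - width (hullOf ω) u‖ₑ ^ r ∂(jointLaw n μ) ∂(sphereσ d))
        ^ (q / r) := by rw [lintegral_lintegral_swap hF.aemeasurable]
    _ ≤ (∫⁻ _, B ∂(sphereσ d)) ^ (q / r) := by
        gcongr ?_ ^ _
        refine lintegral_mono_ae ?_
        filter_upwards [ae_norm_eq_one_sphereσ] with u hu
        exact lintegral_enorm_width_sub_width_hullOf_rpow_le hM hα hL hε₀ hε₀1 hn hu hr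
    _ ≤ B ^ (q / r) := by
        rw [lintegral_const]
        gcongr
        exact mul_le_of_le_one_right' sphereσ_univ_le_one

end Width

theorem stmt5_general (d : ℕ) (α L ε₀ : ℝ) (hα : 0 < α) (hL : 0 < L)
    (hε₀ : 0 < ε₀) (hε₀1 : ε₀ ≤ 1) (p q : ℝ) (hp : 1 ≤ p) (hq : 1 ≤ q) :
    ∃ C > (0:ℝ), ∀ n : ℕ, 1 ≤ n →
      ∀ (μ : Measure (Euc d)) (K : Set (Euc d)), MemM α L ε₀ μ K →
        ∫⁻ ω, ENNReal.ofReal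
            (|lpNorm d p (fun u => suppFn K u + suppFn K (-u))
              - lpNorm d p (fun u => suppFn (hullOf ω) u + suppFn (hullOf ω) (-u))| ^ q)
          ∂(jointLaw n μ)
          ≤ ENNReal.ofReal (C * (n : ℝ) ^ (-(q/α))) := by
  set r := max p q
  have hr : 1 ≤ r := hp.trans (le_max_left p q)
  have hΓ : 0 < Real.Gamma (r / α + 1) := Real.Gamma_pos_of_pos (by positivity)
  refine ⟨(2 ^ r * Real.Gamma (r / α + 1) * (L * (ε₀ / 2) ^ α) ^ (-(r / α))) ^ (q / r),
    by positivity, fun n hn μ K hM => ?_⟩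
  have : Nonempty (Fin n) := ⟨⟨0, hn⟩⟩
  have hK0 : K.Nonempty := hM.2.1.2.2.mono interior_subset
  calc _ ≤ ∫⁻ ω, (∫⁻ u, ‖width K u - width (hullOf ω) u‖ₑ ^ r ∂(sphereσ d)) ^ (q / r)
          ∂(jointLaw n μ) :=
        lintegral_mono fun ω => ofReal_abs_lpNorm_sub_rpow_le hp (le_max_left p q)
          (by linarith) ((continuous_width hK0 hM.2.2.1).memLp_sphereσ _)
          ((continuous_width_hullOf.comp (continuous_const.prodMk continuous_id)).memLp_sphereσ _)
    _ ≤ _ := lintegral_rpow_lintegral_enorm_width_sub_width_hullOf_le hM hα hL hε₀ hε₀1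
        (by omega) (by linarith) hr (le_max_right p q)
    _ = _ := by
        have hb : 0 < L * (ε₀ / 2) ^ α := by positivity
        rw [ENNReal.ofReal_rpow_of_nonneg (by positivity) (by positivity),
          Real.mul_rpow n.cast_nonneg hb.le, mul_left_comm _ ((n : ℝ) ^ _),
          mul_comm _ ((n : ℝ) ^ _),
          Real.mul_rpow (by positivity) (by positivity), ← Real.rpow_mul n.cast_nonneg]
        congr 3
        field_simp

theorem stmt5 (d : ℕ) (hd : 1 ≤ d) (α L ε₀ : ℝ) (hα : 0 < α) (hL : 0 < L)
    (hε₀ : 0 < ε₀) (hε₀1 : ε₀ ≤ 1) (p q : ℝ) (hp : 1 ≤ p) (hq : 1 ≤ q) :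
    ∃ C > (0:ℝ), ∀ n : ℕ, 1 ≤ n →
      ∀ (μ : Measure (Euc d)) (K : Set (Euc d)), MemM α L ε₀ μ K →
        ∫⁻ ω, ENNReal.ofReal
            (|lpNorm d p (fun u => suppFn K u + suppFn K (-u))
              - lpNorm d p (fun u => suppFn (hullOf ω) u + suppFn (hullOf ω) (-u))| ^ q)
          ∂(jointLaw n μ)
          ≤ ENNReal.ofReal (C * (n : ℝ) ^ (-(q/α))) :=
  stmt5_general d α L ε₀ hα hL hε₀ hε₀1 p q hp hq
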